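/- Let T : D* → D* be the translation map, (Ta)(x) = a(x+1) on both D⁰ and D¹; T is an automorphism of the differential graded algebra D*. Let K be the k-linear map of degree −1 that is 0 on D⁰ and on D¹ is the natural inclusion D¹ ↪ D⁰ (a finitely supported function is eventually constant). Then d∘K + K∘d = T − id on D*; in particular the chain map T is chain homotopic to the identity. -/
import Mathlib


/-- A function `f : ℤ → k` is eventually constant at `+∞` and at `-∞` :
there are `a, b ∈ k` and `N ∈ ℕ` with `f n = a` for all `n ≥ N` and `f n = b` for all
`n ≤ -N`.  These functions form the `k`-module `D⁰`. -/
def EventuallyConstant (k : Type) [CommRing k] (f : ℤ → k) : Prop :=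
  ∃ (a b : k) (N : ℕ),
    (∀ n : ℤ, (N : ℤ) ≤ n → f n = a) ∧ (∀ n : ℤ, n ≤ -(N : ℤ) → f n = b)

variable (k : Type) [CommRing k]

/-- the differential `d : D⁰ → D¹`, `(df)(x) = f (x+1) - f x` (difference calculus) -/
noncomputable def delta (f : ℤ → k) : ℤ → k := fun x => f (x + 1) - f x

/-- the left action of `D⁰` on `D¹` : `(f·ω)(x) = f x * ω x` -/
noncomputable def lmul (f ω : ℤ → k) : ℤ → k := fun x => f x * ω x

/-- the right action of `D⁰` on `D¹` : `(ω·f)(x) = f (x+1) * ω x` -/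
noncomputable def rmul (ω f : ℤ → k) : ℤ → k := fun x => f (x + 1) * ω x

/-- the translation operator `T`, `(Ta)(x) = a(x+1)` -/
noncomputable def Tsh (f : ℤ → k) : ℤ → k := fun x => f (x + 1)

/-- `T` is an automorphism of the differential graded algebra `D*`
(it is bijective, preserves `D⁰` and `D¹`, is multiplicative for all the products, and
commutes with `d`).  Letting `K` be the degree `−1` map which is `0` on `D⁰` and the
natural inclusion `D¹ ↪ D⁰` on `D¹`, one has `d∘K + K∘d = T − id` on `D*` (on `D⁰` this
reads `ι(df) = Tf − f` and on `D¹` it reads `d(ιω) = Tω − ω`); in particular `T` is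
chain homotopic to the identity. -/
theorem statement12 (k : Type) [CommRing k] :
    -- T is an automorphism of the differential graded algebra D*
    Function.Bijective (Tsh k) ∧
    (∀ f : ℤ → k, EventuallyConstant k f ↔ EventuallyConstant k (Tsh k f)) ∧
    (∀ ω : ℤ → k, (Function.support ω).Finite ↔ (Function.support (Tsh k ω)).Finite) ∧
    (∀ f g : ℤ → k, Tsh k (f * g) = Tsh k f * Tsh k g) ∧
    (∀ f ω : ℤ → k, Tsh k (lmul k f ω) = lmul k (Tsh k f) (Tsh k ω) ∧
        Tsh k (rmul k ω f) = rmul k (Tsh k ω) (Tsh k f)) ∧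
    (∀ f : ℤ → k, delta k (Tsh k f) = Tsh k (delta k f)) ∧
    -- d∘K + K∘d = T − id, in degree 0 and in degree 1
    (∀ f : ℤ → k, EventuallyConstant k f → delta k f = Tsh k f - f) ∧
    (∀ ω : ℤ → k, (Function.support ω).Finite → delta k ω = Tsh k ω - ω) := by
  constructor
  · exact ⟨fun f g h => by funext x; have := congrFun h (x - 1); simpa [Tsh] using this,
      fun f => ⟨fun x => f (x - 1), by funext x; simp [Tsh]⟩⟩
  refine ⟨?_, ?_, fun f g => rfl, fun f ω => ⟨rfl, rfl⟩, fun f => rfl,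
    fun f _ => by funext x; simp [delta, Tsh], fun ω _ => by funext x; simp [delta, Tsh]⟩
  · intro f
    constructor
    · rintro ⟨a, b, N, h1, h2⟩
      refine ⟨a, b, N + 1, fun n hn => h1 _ (by omega), fun n hn => h2 _ (by omega)⟩
    · rintro ⟨a, b, N, h1, h2⟩
      refine ⟨a, b, N + 1, fun n hn => ?_, fun n hn => ?_⟩
      · have := h1 (n - 1) (by omega); simpa [Tsh] using this
      · have := h2 (n - 1) (by omega); simpa [Tsh] using this
  · intro ω
    have hsub : Function.support (Tsh k ω) = (fun x : ℤ => x + 1) ⁻¹' Function.support ω := by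
      ext x; simp [Tsh, Function.support]
    constructor
    · intro h
      rw [hsub]
      exact h.preimage (fun a _ b _ hab => by omega)
    · intro h
      have : Function.support ω = (fun x : ℤ => x - 1) ⁻¹' Function.support (Tsh k ω) := by
        ext x; simp [Tsh, Function.support]
      rw [this]
      exact h.preimage (fun a _ b _ hab => by omega)
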